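/- Let X be a real Banach space and let x ∈ S_X be an α-strongly exposed point, i.e., there exists x* ∈ D(x) such that for every ε > 0 there exists δ > 0 for which the slice S(x*,δ) can be covered by finitely many sets of diameter at most ε. Then x is not a 𝔇-point. -/

import Mathlib

open NormedSpace Topology

/-- `x` is a 𝔇-point of the real Banach space `X`. -/
def IsDPoint (X : Type*) [NormedAddCommGroup X] [NormedSpace ℝ X] (x : X) : Prop :=
  ‖x‖ = 1 ∧ ∀ f : StrongDual ℝ X, ‖f‖ = 1 → f x = 1 → ∀ ε : ℝ, 0 < ε →
    sSup ((fun y => ‖x - y‖) '' {y : X | ‖y‖ ≤ 1 ∧ 1 - ε < f y}) = 2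

/-!
If `x` were a 𝔇-point and `h ∈ D(x)` had slices of Kuratowski measure tending to `0`, then
points of the slices `S(h, δ)` at distance almost `2` from `x` would accumulate, by compactness,
at a point `w` of the face `{h = 1}` of the unit ball with `‖x - w‖ = 2`. Hahn–Banach gives
`g ∈ D(x)` with `g w = -1`; the functional `(h + g) / 2` again lies in `D(x)`, has small slices,
and its face lies in that of `h` and at distance `2` from `w`. Iterating from the α-strongly
exposing functional `f` produces arbitrarily many points of the face of `f` that are pairwise
`2` apart, whereas this face lies in a slice of `f` covered by finitely many sets of
diameter `1`.
-/

open Set Filter Metric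

theorem exists_finite_ball_cover_of_subset_iUnion {α ι : Type*} [PseudoMetricSpace α] [Finite ι]
    {A : ι → Set α} {s : Set α} {ε r : ℝ} (hr : 0 < r) (hεr : ε < r)
    (hA : ∀ i, ediam (A i) ≤ ENNReal.ofReal ε) (hs : s ⊆ ⋃ i, A i) :
    ∃ t : Set α, t.Finite ∧ s ⊆ ⋃ c ∈ t, ball c r := by
  refine ⟨⋃ i, ⋃ hne : (A i).Nonempty, {hne.some},
    finite_iUnion fun i => finite_iUnion fun _ => finite_singleton _, fun y hy => ?_⟩
  obtain ⟨i, hi⟩ := mem_iUnion.1 (hs hy)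
  have hne : (A i).Nonempty := ⟨y, hi⟩
  refine mem_biUnion (mem_iUnion₂.2 ⟨i, hne, rfl⟩) (mem_ball.2 (edist_lt_ofReal.1 ?_))
  calc edist y hne.some ≤ ENNReal.ofReal ε := edist_le_of_ediam_le hi hne.some_mem (hA i)
    _ < ENNReal.ofReal r := (ENNReal.ofReal_lt_ofReal_iff hr).2 hεr

theorem totallyBounded_range_of_eventually_mem_iUnion {α : Type*} [PseudoMetricSpace α]
    {y : ℕ → α}
    (hy : ∀ ε > 0, ∃ (n : ℕ) (A : Fin n → Set α), (∀ i, ediam (A i) ≤ ENNReal.ofReal ε) ∧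
      ∀ᶠ m in atTop, y m ∈ ⋃ i, A i) :
    TotallyBounded (range y) := by
  refine Metric.totallyBounded_iff.2 fun ε hε => ?_
  obtain ⟨n, A, hA, hev⟩ := hy (ε / 2) (half_pos hε)
  obtain ⟨N, hN⟩ := eventually_atTop.1 hev
  obtain ⟨t, ht, htail⟩ := exists_finite_ball_cover_of_subset_iUnion hε (half_lt_self hε) hA
    (s := y '' Ici N) (by rintro _ ⟨m, hm, rfl⟩; exact hN m hm)
  refine ⟨y '' Iio N ∪ t, ((finite_Iio N).image y).union ht, ?_⟩
  rintro _ ⟨m, rfl⟩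
  rcases lt_or_ge m N with hm | hm
  · exact mem_biUnion (Or.inl ⟨m, hm, rfl⟩) (mem_ball_self hε)
  · obtain ⟨c, hc, hmc⟩ := mem_iUnion₂.1 (htail ⟨m, hm, rfl⟩)
    exact mem_biUnion (Or.inr hc) hmc

theorem Finset.card_le_of_subset_iUnion_of_pairwise_lt_edist {α ι : Type*}
    [PseudoEMetricSpace α] [Fintype ι] {A : ι → Set α} {r : ENNReal} (hA : ∀ i, ediam (A i) ≤ r)
    {W : Finset α} (hW : ↑W ⊆ ⋃ i, A i) (hsep : (W : Set α).Pairwise fun a b => r < edist a b) :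
    W.card ≤ Fintype.card ι := by
  classical
  have hsmall : ∀ i, (W.filter (· ∈ A i)).card ≤ 1 := by
    refine fun i => Finset.card_le_one.2 fun a ha b hb => ?_
    simp only [Finset.mem_filter] at ha hb
    by_contra hab
    exact (hsep ha.1 hb.1 hab).not_ge (edist_le_of_ediam_le ha.2 hb.2 (hA i))
  calc W.card ≤ (Finset.univ.biUnion fun i => W.filter (· ∈ A i)).card :=
        Finset.card_le_card fun w hw => by simpa [hw] using hW hw
    _ ≤ ∑ i, (W.filter (· ∈ A i)).card := Finset.card_biUnion_le
    _ ≤ ∑ _i : ι, 1 := Finset.sum_le_sum fun i _ => hsmall i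
    _ = Fintype.card ι := by simp

section Slices

variable {X : Type*} [NormedAddCommGroup X] [NormedSpace ℝ X]

def unitBallSlice (f : StrongDual ℝ X) (δ : ℝ) : Set X := {y | ‖y‖ ≤ 1 ∧ 1 - δ < f y}

def unitBallFace (f : StrongDual ℝ X) : Set X := {y | ‖y‖ ≤ 1 ∧ f y = 1}

/-- The slices `S(f, δ)` have Kuratowski measure of non-compactness tending to `0`. -/
def IsAlphaExposing (f : StrongDual ℝ X) : Prop :=
  ∀ ε : ℝ, 0 < ε → ∃ δ : ℝ, 0 < δ ∧ ∃ (n : ℕ) (A : Fin n → Set X),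
    (∀ i, ediam (A i) ≤ ENNReal.ofReal ε) ∧ unitBallSlice f δ ⊆ ⋃ i, A i

theorem apply_le_norm_of_norm_le_one {f : StrongDual ℝ X} (hf : ‖f‖ ≤ 1) (y : X) : f y ≤ ‖y‖ :=
  (le_abs_self _).trans (f.le_of_opNorm_le hf y |>.trans_eq (one_mul _))

theorem unitBallFace_subset_unitBallSlice (f : StrongDual ℝ X) {δ : ℝ} (hδ : 0 < δ) :
    unitBallFace f ⊆ unitBallSlice f δ :=
  fun y hy => ⟨hy.1, by linarith [hy.2]⟩

theorem IsAlphaExposing.of_unitBallSlice_subset {f g : StrongDual ℝ X} (hf : IsAlphaExposing f)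
    (hsub : ∀ δ > 0, ∃ δ' > 0, unitBallSlice g δ' ⊆ unitBallSlice f δ) : IsAlphaExposing g := by
  intro ε hε
  obtain ⟨δ, hδ, n, A, hA, hcov⟩ := hf ε hε
  obtain ⟨δ', hδ', hsub⟩ := hsub δ hδ
  exact ⟨δ', hδ', n, A, hA, hsub.trans hcov⟩

theorem norm_midpoint_le_one {f g : StrongDual ℝ X} (hf : ‖f‖ ≤ 1) (hg : ‖g‖ ≤ 1) :
    ‖(2 : ℝ)⁻¹ • (f + g)‖ ≤ 1 := by
  rw [norm_smul, norm_inv, Real.norm_two]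
  linarith [norm_add_le f g]

theorem unitBallSlice_midpoint_subset (f : StrongDual ℝ X) {g : StrongDual ℝ X} (hg : ‖g‖ ≤ 1)
    (δ : ℝ) : unitBallSlice ((2 : ℝ)⁻¹ • (f + g)) δ ⊆ unitBallSlice f (2 * δ) := by
  rintro y ⟨hy, hfgy⟩
  have hgy := (apply_le_norm_of_norm_le_one hg y).trans hy
  simp only [smul_apply, add_apply, smul_eq_mul] at hfgy
  exact ⟨hy, by linarith⟩

theorem unitBallFace_midpoint_subset {f g : StrongDual ℝ X} (hf : ‖f‖ ≤ 1) (hg : ‖g‖ ≤ 1) :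
    unitBallFace ((2 : ℝ)⁻¹ • (f + g)) ⊆ unitBallFace f ∩ unitBallFace g := by
  rintro y ⟨hy, hfgy⟩
  have hfy := (apply_le_norm_of_norm_le_one hf y).trans hy
  have hgy := (apply_le_norm_of_norm_le_one hg y).trans hy
  simp only [smul_apply, add_apply, smul_eq_mul] at hfgy
  exact ⟨⟨hy, by linarith⟩, hy, by linarith⟩

theorem exists_dual_eq_one_eq_neg_one {x w : X} (hx : ‖x‖ ≤ 1) (hw : ‖w‖ ≤ 1)
    (hxw : ‖x - w‖ = 2) : ∃ g : StrongDual ℝ X, ‖g‖ ≤ 1 ∧ g x = 1 ∧ g w = -1 := by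
  obtain ⟨g, hg, hgxw⟩ := exists_dual_vector'' ℝ (x - w)
  have hgx := (apply_le_norm_of_norm_le_one hg x).trans hx
  have hgw := (apply_le_norm_of_norm_le_one hg (-w)).trans (norm_neg w ▸ hw)
  rw [map_sub, hxw, RCLike.ofReal_real_eq_id, id] at hgxw
  rw [map_neg] at hgw
  exact ⟨g, hg, by linarith, by linarith⟩

theorem IsAlphaExposing.exists_tendsto_subseq [CompleteSpace X] {f : StrongDual ℝ X}
    (hf : IsAlphaExposing f) {y : ℕ → X} {t : ℕ → ℝ} (ht : Tendsto t atTop (𝓝 0))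
    (hy : ∀ m, y m ∈ unitBallSlice f (t m)) :
    ∃ w, ∃ φ : ℕ → ℕ, StrictMono φ ∧ Tendsto (y ∘ φ) atTop (𝓝 w) := by
  have htb : TotallyBounded (range y) := by
    refine totallyBounded_range_of_eventually_mem_iUnion fun ε hε => ?_
    obtain ⟨δ, hδ, n, A, hA, hcov⟩ := hf ε hε
    refine ⟨n, A, hA, (ht.eventually (gt_mem_nhds hδ)).mono fun m hm => hcov ?_⟩
    exact ⟨(hy m).1, by linarith [(hy m).2]⟩
  obtain ⟨w, -, φ, hφ, hlim⟩ := htb.closure.isCompact_of_isClosed isClosed_closure |>.tendsto_subseq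
    fun m => subset_closure (mem_range_self m)
  exact ⟨w, φ, hφ, hlim⟩

theorem IsAlphaExposing.exists_mem_unitBallFace_norm_sub_eq_two [CompleteSpace X]
    {f : StrongDual ℝ X} (hf : IsAlphaExposing f) (hfn : ‖f‖ ≤ 1) {x : X} (hx : ‖x‖ ≤ 1)
    (hfar : ∀ δ > 0, ∃ y ∈ unitBallSlice f δ, 2 - δ < ‖x - y‖) :
    ∃ w ∈ unitBallFace f, ‖x - w‖ = 2 := by
  choose y hy hxy using fun m : ℕ => hfar (1 / (m + 1)) Nat.one_div_pos_of_nat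
  obtain ⟨w, φ, hφ, hlim⟩ := hf.exists_tendsto_subseq tendsto_one_div_add_atTop_nhds_zero_nat hy
  have hτ : Tendsto (fun m => 1 / ((φ m : ℝ) + 1)) atTop (𝓝 0) :=
    tendsto_one_div_add_atTop_nhds_zero_nat.comp hφ.tendsto_atTop
  have hw : ‖w‖ ≤ 1 := le_of_tendsto' hlim.norm fun m => (hy (φ m)).1
  have hfw : 1 ≤ f w :=
    le_of_tendsto_of_tendsto' (by simpa using hτ.const_sub 1) ((f.continuous.tendsto w).comp hlim)
      fun m => (hy (φ m)).2.le
  have hxw : 2 ≤ ‖x - w‖ :=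
    le_of_tendsto_of_tendsto' (by simpa using hτ.const_sub 2) (tendsto_const_nhds.sub hlim).norm
      fun m => (hxy (φ m)).le
  refine ⟨w, ⟨hw, le_antisymm ((apply_le_norm_of_norm_le_one hfn w).trans hw) hfw⟩,
    le_antisymm ?_ hxw⟩
  linarith [norm_sub_le x w]

end Slices

namespace IsDPoint

variable {X : Type*} [NormedAddCommGroup X] [NormedSpace ℝ X] {x : X}

theorem exists_mem_unitBallSlice_lt_norm_sub (hD : IsDPoint X x) {h : StrongDual ℝ X}
    (hh : ‖h‖ ≤ 1) (hhx : h x = 1) {δ : ℝ} (hδ : 0 < δ) :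
    ∃ y ∈ unitBallSlice h δ, 2 - δ < ‖x - y‖ := by
  have hh1 : ‖h‖ = 1 := le_antisymm hh (by simpa [hhx, hD.1] using h.le_opNorm x)
  have hne : ((fun y => ‖x - y‖) '' unitBallSlice h δ).Nonempty :=
    ⟨_, x, ⟨hD.1.le, by linarith⟩, rfl⟩
  have hsup : sSup ((fun y => ‖x - y‖) '' unitBallSlice h δ) = 2 := hD.2 h hh1 hhx δ hδ
  obtain ⟨_, ⟨y, hy, rfl⟩, hlt⟩ := exists_lt_of_lt_csSup (b := 2 - δ) hne (by linarith)
  exact ⟨y, hy, hlt⟩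

theorem exists_subface_separated [CompleteSpace X] (hD : IsDPoint X x) {h : StrongDual ℝ X}
    (hh : ‖h‖ ≤ 1) (hhx : h x = 1) (hα : IsAlphaExposing h) :
    ∃ h' : StrongDual ℝ X, ‖h'‖ ≤ 1 ∧ h' x = 1 ∧ IsAlphaExposing h' ∧
      ∃ w ∈ unitBallFace h, unitBallFace h' ⊆ unitBallFace h ∩ {y | 2 ≤ ‖y - w‖} := by
  obtain ⟨w, hw, hxw⟩ := hα.exists_mem_unitBallFace_norm_sub_eq_two hh hD.1.le
    fun δ hδ => hD.exists_mem_unitBallSlice_lt_norm_sub hh hhx hδ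
  obtain ⟨g, hg, hgx, hgw⟩ := exists_dual_eq_one_eq_neg_one hD.1.le hw.1 hxw
  refine ⟨(2 : ℝ)⁻¹ • (h + g), norm_midpoint_le_one hh hg, ?_, ?_, w, hw, fun y hy => ?_⟩
  · simp only [smul_apply, add_apply, smul_eq_mul, hhx, hgx]
    norm_num
  · refine hα.of_unitBallSlice_subset fun δ hδ => ⟨δ / 2, half_pos hδ, ?_⟩
    simpa [mul_div_cancel₀] using unitBallSlice_midpoint_subset h hg (δ / 2)
  · obtain ⟨hyh, hyg⟩ := unitBallFace_midpoint_subset hh hg hy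
    refine ⟨hyh, ?_⟩
    calc (2 : ℝ) = g (y - w) := by rw [map_sub, hyg.2, hgw]; norm_num
      _ ≤ ‖y - w‖ := apply_le_norm_of_norm_le_one hg _

theorem exists_separated_finset [CompleteSpace X] (hD : IsDPoint X x) {f : StrongDual ℝ X}
    (hf : ‖f‖ ≤ 1) (hfx : f x = 1) (hα : IsAlphaExposing f) (n : ℕ) :
    ∃ W : Finset X, W.card = n ∧ ↑W ⊆ unitBallFace f ∧
      (W : Set X).Pairwise fun a b => 2 ≤ ‖a - b‖ := by
  classical
  suffices ∀ n : ℕ, ∃ h : StrongDual ℝ X, ‖h‖ ≤ 1 ∧ h x = 1 ∧ IsAlphaExposing h ∧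
      unitBallFace h ⊆ unitBallFace f ∧ ∃ W : Finset X, W.card = n ∧ ↑W ⊆ unitBallFace f ∧
        ((W : Set X).Pairwise fun a b => 2 ≤ ‖a - b‖) ∧
        ∀ y ∈ unitBallFace h, ∀ w ∈ W, 2 ≤ ‖y - w‖ by
    obtain ⟨-, -, -, -, -, W, hcard, hWf, hWsep, -⟩ := this n
    exact ⟨W, hcard, hWf, hWsep⟩
  intro n
  induction n with
  | zero => exact ⟨f, hf, hfx, hα, subset_rfl, ∅, rfl, by simp, by simp, by simp⟩
  | succ n ih =>
    obtain ⟨h, hh, hhx, hhα, hhf, W, hcard, hWf, hWsep, hWfar⟩ := ih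
    obtain ⟨h', hh', hh'x, hh'α, w, hw, hsub⟩ := hD.exists_subface_separated hh hhx hhα
    have hwW : w ∉ W := fun hwW => by have := hWfar w hw w hwW; norm_num at this
    refine ⟨h', hh', hh'x, hh'α, fun y hy => hhf (hsub hy).1, insert w W,
      by rw [Finset.card_insert_of_notMem hwW, hcard], ?_, ?_, fun y hy => ?_⟩
    · rw [Finset.coe_insert]
      exact insert_subset (hhf hw) hWf
    · rw [Finset.coe_insert, pairwise_insert]
      exact ⟨hWsep, fun b hb _ => ⟨hWfar w hw b hb, norm_sub_rev w b ▸ hWfar w hw b hb⟩⟩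
    · exact Finset.forall_mem_insert _ _ _ |>.2 ⟨(hsub hy).2, hWfar y (hsub hy).1⟩

end IsDPoint

theorem alphaStronglyExposed_not_dPoint
    (X : Type*) [NormedAddCommGroup X] [NormedSpace ℝ X] [CompleteSpace X]
    (x : X)
    (hexp : ∃ f : StrongDual ℝ X, ‖f‖ = 1 ∧ f x = 1 ∧
      ∀ ε : ℝ, 0 < ε → ∃ δ : ℝ, 0 < δ ∧
        ∃ (n : ℕ) (A : Fin n → Set X),
          (∀ i, EMetric.diam (A i) ≤ ENNReal.ofReal ε) ∧
          {y : X | ‖y‖ ≤ 1 ∧ 1 - δ < f y} ⊆ ⋃ i, A i) :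
    ¬ IsDPoint X x := by
  intro hD
  obtain ⟨f, hf, hfx, hα⟩ := hexp
  obtain ⟨δ, hδ, n, A, hA, hcov⟩ := hα 1 one_pos
  obtain ⟨W, hcard, hWf, hWsep⟩ := hD.exists_separated_finset hf.le hfx hα (n + 1)
  have hWA : ↑W ⊆ ⋃ i, A i := fun w hw => hcov (unitBallFace_subset_unitBallSlice f hδ (hWf hw))
  have hWsep' : (W : Set X).Pairwise fun a b => ENNReal.ofReal 1 < edist a b :=
    hWsep.mono' fun a b hab => by
      rw [edist_dist, dist_eq_norm, ENNReal.ofReal_lt_ofReal_iff (by linarith)]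
      linarith
  have hle := Finset.card_le_of_subset_iUnion_of_pairwise_lt_edist hA hWA hWsep'
  rw [hcard, Fintype.card_fin] at hle
  omega
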